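/- Let o(n) be the number of partitions of n with odd minimal excludant and e(n) the number with even minimal excludant. Then o(n) − e(n) = p(n) + 2 Σ_{m≥1} (−1)^m p(n − m(m+1)/2), where p(k)=0 for k<0. -/

import Mathlib

open Finset

/-- The minimal excludant of a partition: the least positive integer not a part. -/
noncomputable def mex {n : ℕ} (π : Nat.Partition n) : ℕ :=
  sInf {m : ℕ | 0 < m ∧ m ∉ π.parts}

/-- Number of partitions of `n` with minimal excludant `m`. -/
noncomputable def pmex (m n : ℕ) : ℕ :=
  ((Finset.univ : Finset (Nat.Partition n)).filter (fun π => mex π = m)).card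

/-- The partition function, extended by `0` on negative integers. -/
noncomputable def pz (k : ℤ) : ℕ := if 0 ≤ k then Fintype.card (Nat.Partition k.toNat) else 0

/-- Number of partitions of `m` into distinct parts. -/
def qdist (m : ℕ) : ℕ := (Nat.Partition.distincts m).card

/-- A two-colored distinct-parts partition of `n`: a set of distinct (part, color)
pairs with positive parts summing to `n`. -/
def IsTCD (n : ℕ) (s : Finset (ℕ × Fin 2)) : Prop :=
  (∀ p ∈ s, 0 < p.1) ∧ ∑ p ∈ s, p.1 = n

noncomputable def D2 (n : ℕ) : ℕ := Set.ncard {s : Finset (ℕ × Fin 2) | IsTCD n s}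
noncomputable def D2e (n : ℕ) : ℕ :=
  Set.ncard {s : Finset (ℕ × Fin 2) | IsTCD n s ∧ Even s.card}
noncomputable def D2o (n : ℕ) : ℕ :=
  Set.ncard {s : Finset (ℕ × Fin 2) | IsTCD n s ∧ Odd s.card}

/-!
A partition has mex greater than `m` exactly when it contains `1, 2, …, m`, and removing these
parts is a bijection onto the partitions of `n - m(m+1)/2`; so `p(n - m(m+1)/2)` counts the
partitions of `n` with mex greater than `m`. Writing `(-1)^(j+1) = 1 + 2 ∑_{1 ≤ m < j} (-1)^m`
for `j = mex π` and summing over all `π ⊢ n` turns `o(n) - e(n)` into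
`p(n) + 2 ∑_{m ≥ 1} (-1)^m #{π | m < mex π}`.
-/

theorem sum_Icc_one_id (m : ℕ) : ∑ i ∈ Icc 1 m, i = m * (m + 1) / 2 := by
  induction m with
  | zero => simp
  | succ m ih =>
    rw [sum_Icc_succ_top (by omega), ih]
    have : (m + 1) * (m + 1 + 1) = m * (m + 1) + 2 * (m + 1) := by ring
    omega

namespace Nat.Partition

variable {k n : ℕ}

def addParts (σ : Nat.Partition k) (hk : k ≤ n) (τ : Nat.Partition (n - k)) :
    Nat.Partition n where
  parts := τ.parts + σ.parts
  parts_pos h := (Multiset.mem_add.mp h).elim τ.parts_pos σ.parts_pos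
  parts_sum := by rw [Multiset.sum_add, τ.parts_sum, σ.parts_sum]; omega

def removeParts (σ : Nat.Partition k) (π : Nat.Partition n) (h : σ.parts ≤ π.parts) :
    Nat.Partition (n - k) where
  parts := π.parts - σ.parts
  parts_pos ha := π.parts_pos (Multiset.mem_of_le (Multiset.sub_le_self _ _) ha)
  parts_sum := by
    have := congrArg Multiset.sum (tsub_add_cancel_of_le h)
    rw [Multiset.sum_add, π.parts_sum, σ.parts_sum] at this
    omega

theorem le_of_parts_le (σ : Nat.Partition k) (π : Nat.Partition n) (h : σ.parts ≤ π.parts) :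
    k ≤ n := by
  obtain ⟨u, hu⟩ := Multiset.le_iff_exists_add.mp h
  have := congrArg Multiset.sum hu
  rw [Multiset.sum_add, π.parts_sum, σ.parts_sum] at this
  omega

def containingEquiv (σ : Nat.Partition k) (hk : k ≤ n) :
    {π : Nat.Partition n // σ.parts ≤ π.parts} ≃ Nat.Partition (n - k) where
  toFun π := removeParts σ π π.2
  invFun τ := ⟨addParts σ hk τ, Multiset.le_add_left _ _⟩
  left_inv π := Subtype.ext <| Nat.Partition.ext <| tsub_add_cancel_of_le π.2
  right_inv _ := Nat.Partition.ext <| add_tsub_cancel_right _ _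

theorem card_filter_parts_le (σ : Nat.Partition k) :
    #{π : Nat.Partition n | σ.parts ≤ π.parts} = pz ((n : ℤ) - k) := by
  by_cases hk : k ≤ n
  · rw [← Fintype.card_subtype, Fintype.card_congr (containingEquiv σ hk), pz, if_pos (by omega),
      show ((n : ℤ) - k).toNat = n - k by omega]
  · rw [pz, if_neg (by omega), Finset.card_eq_zero, filter_eq_empty_iff]
    exact fun π _ h => hk (le_of_parts_le σ π h)

def staircase (m : ℕ) : Nat.Partition (m * (m + 1) / 2) where
  parts := (Icc 1 m).val
  parts_pos h := (mem_Icc.mp (mem_val.mp h)).1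
  parts_sum := by rw [← sum_Icc_one_id m, sum_eq_multiset_sum, Multiset.map_id']

end Nat.Partition

theorem pz_natCast (n : ℕ) : pz n = Fintype.card (Nat.Partition n) := by
  simp [pz]

section Mex

variable {n : ℕ}

theorem mex_set_nonempty (π : Nat.Partition n) : {m : ℕ | 0 < m ∧ m ∉ π.parts}.Nonempty :=
  ⟨n + 1, n.succ_pos, fun h => by have := Nat.Partition.le_of_mem_parts h; omega⟩

theorem lt_mex_iff (π : Nat.Partition n) (m : ℕ) :
    m < mex π ↔ ∀ k ∈ Icc 1 m, k ∈ π.parts := by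
  rw [mex, ← Nat.add_one_le_iff, le_csInf_iff' (mex_set_nonempty π)]
  constructor
  · intro h k hk
    obtain ⟨hk1, hkm⟩ := mem_Icc.mp hk
    by_contra hkπ
    have := h ⟨hk1, hkπ⟩
    omega
  · intro h k ⟨hk, hkπ⟩
    by_contra hlt
    exact hkπ (h k (mem_Icc.mpr ⟨hk, by omega⟩))

theorem mex_pos (π : Nat.Partition n) : 0 < mex π :=
  (lt_mex_iff π 0).mpr (by simp)

theorem mex_le (π : Nat.Partition n) : mex π ≤ n + 1 :=
  Nat.sInf_le ⟨n.succ_pos, fun h => by have := Nat.Partition.le_of_mem_parts h; omega⟩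

theorem lt_mex_iff_staircase_le (π : Nat.Partition n) (m : ℕ) :
    m < mex π ↔ (Nat.Partition.staircase m).parts ≤ π.parts := by
  rw [lt_mex_iff, Nat.Partition.staircase, Multiset.le_iff_subset (Icc 1 m).nodup]
  rfl

theorem card_filter_lt_mex (m : ℕ) :
    #{π : Nat.Partition n | m < mex π} = pz ((n : ℤ) - (m * (m + 1) / 2 : ℕ)) := by
  simp_rw [lt_mex_iff_staircase_le]
  exact Nat.Partition.card_filter_parts_le _

theorem neg_one_pow_add_one_eq (j : ℕ) (hj : 0 < j) :
    (-1 : ℤ) ^ (j + 1) = 1 + 2 * ∑ m ∈ Ico 1 j, (-1 : ℤ) ^ m := by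
  induction j, hj using Nat.le_induction with
  | base => simp
  | succ j hj ih => rw [sum_Ico_succ_top hj, mul_add, ← add_assoc, ← ih]; ring

theorem card_filter_odd_sub_card_filter_even {α : Type*} (s : Finset α) (f : α → ℕ) :
    (#{a ∈ s | Odd (f a)} : ℤ) - #{a ∈ s | Even (f a)} = ∑ a ∈ s, (-1 : ℤ) ^ (f a + 1) := by
  simp only [card_filter, Nat.cast_sum, ← sum_sub_distrib]
  refine sum_congr rfl fun a _ => ?_
  rcases Nat.even_or_odd (f a) with h | h
  · simp [h, Nat.not_odd_iff_even.mpr h, h.add_one.neg_one_pow]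
  · simp [h, Nat.not_even_iff_odd.mpr h, h.add_one.neg_one_pow]

theorem sum_sum_Ico_mex (g : ℕ → ℤ) :
    ∑ π : Nat.Partition n, ∑ m ∈ Ico 1 (mex π), g m =
      ∑ m ∈ Icc 1 n, g m * #{π : Nat.Partition n | m < mex π} := by
  rw [sum_comm' (t' := Icc 1 n) (s' := fun m => {π : Nat.Partition n | m < mex π})]
  · simp [sum_const, mul_comm]
  · intro π m
    have := mex_le π
    simp only [mem_univ, mem_Ico, mem_filter, true_and, mem_Icc]
    omega

end Mex

theorem odd_minus_even_mex_general (n : ℕ) :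
    ((Finset.univ.filter (fun π : Nat.Partition n => Odd (mex π))).card : ℤ) -
      (Finset.univ.filter (fun π : Nat.Partition n => Even (mex π))).card =
    (pz n : ℤ) + 2 * ∑ m ∈ Finset.Icc 1 n,
      (-1 : ℤ) ^ m * pz ((n : ℤ) - (m * (m + 1) / 2 : ℕ)) := by
  calc _ = ∑ π : Nat.Partition n, (-1 : ℤ) ^ (mex π + 1) :=
        card_filter_odd_sub_card_filter_even _ _
    _ = ∑ π : Nat.Partition n, (1 + 2 * ∑ m ∈ Ico 1 (mex π), (-1 : ℤ) ^ m) :=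
        sum_congr rfl fun π _ => neg_one_pow_add_one_eq _ (mex_pos π)
    _ = _ := by
      simp only [sum_add_distrib, ← mul_sum, sum_sum_Ico_mex, card_filter_lt_mex, sum_const,
        card_univ, nsmul_one, pz_natCast]

theorem odd_minus_even_mex (n : ℕ) (hn : 0 < n) :
    ((Finset.univ.filter (fun π : Nat.Partition n => Odd (mex π))).card : ℤ) -
      (Finset.univ.filter (fun π : Nat.Partition n => Even (mex π))).card =
    (pz n : ℤ) + 2 * ∑ m ∈ Finset.Icc 1 n,
      (-1 : ℤ) ^ m * pz ((n : ℤ) - (m * (m + 1) / 2 : ℕ)) :=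
  odd_minus_even_mex_general n
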